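/- arXiv:1810.12386 — 5 statements merged into one kernel-verified Lean document; each statement's English description precedes it below -/
import Mathlib

section
/- Let A, B be n×n matrices over a field F of characteristic p > 0 with n < p, and let λ ∈ F be nonzero. If [A,B] = λB, then B is nilpotent. -/
/-!
If `[a, b] = l • b`, then `b` maps the generalized eigenspace of `a` for `μ` into the one for
`μ + l`, so `b ^ j` maps it into the one for `μ + j * l`. Over an algebraically closed field
the generalized eigenspaces of `a` span the space, and at most `dim V` of them are nonzero.
When `0, 1, …, dim V` are distinct in the field (as they are when `dim V < char`) and `l ≠ 0`,
the values `μ + j * l` with `j ≤ dim V` are distinct, so one of these eigenspaces is zero and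
`b ^ dim V` kills every generalized eigenspace. Matrices over `F` reduce to this case over the
algebraic closure of `F`.
-/

open Module

namespace Module.End

variable {R M : Type*} [CommRing R] [AddCommGroup M] [Module R M]

theorem mapsTo_maxGenEigenspace_of_commutator_eq_smul {a b : End R M} {l : R}
    (h : a * b - b * a = l • b) (μ : R) :
    Set.MapsTo b (a.maxGenEigenspace μ) (a.maxGenEigenspace (μ + l)) := by
  intro x hx
  rw [SetLike.mem_coe, mem_maxGenEigenspace] at hx ⊢
  obtain ⟨k, hk⟩ := hx
  have hsemi : SemiconjBy b (a - μ • 1) (a - (μ + l) • 1) := by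
    rw [SemiconjBy, mul_sub, sub_mul, smul_mul_assoc, one_mul, mul_smul_comm, mul_one,
      eq_add_of_sub_eq h, add_smul]
    abel
  refine ⟨k, ?_⟩
  rw [← mul_apply, ← (hsemi.pow_right k).eq, mul_apply, hk, map_zero]

theorem commutator_pow_eq_smul {a b : End R M} {l : R} (h : a * b - b * a = l • b) (k : ℕ) :
    a * b ^ k - b ^ k * a = ((k : R) * l) • b ^ k := by
  induction k with
  | zero => simp
  | succ k ih =>
    calc a * b ^ (k + 1) - b ^ (k + 1) * a
        = (a * b ^ k - b ^ k * a) * b + b ^ k * (a * b - b * a) := by noncomm_ring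
      _ = (((k + 1 : ℕ) : R) * l) • b ^ (k + 1) := by
        rw [ih, h, smul_mul_assoc, mul_smul_comm, ← pow_succ, ← add_smul]
        push_cast; ring_nf

variable {K V : Type*} [Field K] [AddCommGroup V] [Module K V] [FiniteDimensional K V]

theorem exists_maxGenEigenspace_add_natCast_mul_eq_bot (a : End K V)
    (hinj : Set.InjOn (Nat.cast : ℕ → K) (Set.Iic (finrank K V))) (μ : K) {l : K} (hl : l ≠ 0) :
    ∃ j ≤ finrank K V, a.maxGenEigenspace (μ + j * l) = ⊥ := by
  classical
  by_contra! hne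
  let shift : Fin (finrank K V + 1) → K := fun j ↦ μ + (j : ℕ) * l
  have hshift : Function.Injective shift := fun i j hij ↦
    Fin.ext <| hinj (Nat.lt_succ_iff.mp i.2) (Nat.lt_succ_iff.mp j.2) <|
      mul_right_cancel₀ hl (add_left_cancel hij)
  have hindep := a.independent_maxGenEigenspace.comp hshift
  have hcard := hindep.subtype_ne_bot_le_finrank
  rw [Fintype.card_congr (Equiv.subtypeUnivEquiv (p := fun j ↦ (a.maxGenEigenspace ∘ shift) j ≠ ⊥)
    fun j ↦ hne j (Nat.lt_succ_iff.mp j.2)), Fintype.card_fin] at hcard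
  omega

theorem pow_finrank_eq_zero_of_commutator_eq_smul [IsAlgClosed K] {a b : End K V} {l : K}
    (hinj : Set.InjOn (Nat.cast : ℕ → K) (Set.Iic (finrank K V))) (hl : l ≠ 0)
    (h : a * b - b * a = l • b) : b ^ finrank K V = 0 := by
  rw [← LinearMap.ker_eq_top, eq_top_iff, ← a.iSup_maxGenEigenspace_eq_top, iSup_le_iff]
  intro μ x hx
  obtain ⟨j, hj, hbot⟩ := a.exists_maxGenEigenspace_add_natCast_mul_eq_bot hinj μ hl
  have hbj : (b ^ j) x = 0 := by
    simpa [hbot] using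
      mapsTo_maxGenEigenspace_of_commutator_eq_smul (commutator_pow_eq_smul h j) μ hx
  rw [LinearMap.mem_ker, ← Nat.sub_add_cancel hj, pow_add, mul_apply, hbj, map_zero]

end Module.End

theorem stmt5_general (F : Type*) [Field F] (p : ℕ) [CharP F p]
    (n : ℕ) (hn : n < p)
    (A B : Matrix (Fin n) (Fin n) F) (lam : F) (hlam : lam ≠ 0)
    (h1 : A * B - B * A = lam • B) : IsNilpotent B := by
  let K := AlgebraicClosure F
  let ψ : Matrix (Fin n) (Fin n) F →ₐ[F] End K (Fin n → K) :=
    (Matrix.toLinAlgEquiv'.toAlgHom.restrictScalars F).comp (Algebra.ofId F K).mapMatrix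
  have hψ : Function.Injective ψ :=
    Matrix.toLinAlgEquiv'.injective.comp (Matrix.map_injective (algebraMap F K).injective)
  have hinj : Set.InjOn (Nat.cast : ℕ → K) (Set.Iic (finrank K (Fin n → K))) :=
    (CharP.natCast_injOn_Iio K p).mono fun _ hj ↦
      (show _ ≤ n by simpa using hj).trans_lt hn
  have h : ψ A * ψ B - ψ B * ψ A = algebraMap F K lam • ψ B := by
    rw [algebraMap_smul, ← map_mul, ← map_mul, ← map_sub, h1, map_smul]
  rw [← IsNilpotent.map_iff hψ]
  exact ⟨_, End.pow_finrank_eq_zero_of_commutator_eq_smul hinj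
    ((map_ne_zero _).mpr hlam) h⟩

/-- Let `A, B` be `n×n` matrices over a field of characteristic `p > 0` with `n < p`,
and `λ ≠ 0`. If `[A,B] = λB`, then `B` is nilpotent. -/
theorem stmt5 (F : Type*) [Field F] (p : ℕ) [hp : Fact p.Prime] [CharP F p]
    (n : ℕ) (hn : n < p)
    (A B : Matrix (Fin n) (Fin n) F) (lam : F) (hlam : lam ≠ 0)
    (h1 : A * B - B * A = lam • B) : IsNilpotent B :=
  stmt5_general F p n hn A B lam hlam h1
end

section
/- Let K and I be Lie algebras over a field of prime characteristic p, with K acting on I, and let (α,β) be a compatible pair of derivations (i.e. β([k,v]) = [α(k),v] + [k,β(v)] for all k ∈ K, v ∈ I). Then (α^p, β^p) is also a compatible pair. -/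
/-- Let `K`, `I` be Lie algebras over a field of prime characteristic `p`, with `K`
acting on `I` via `ψ`, and let `(α,β)` be a compatible pair of derivations. Then
`(α^p, β^p)` is also a compatible pair. -/
theorem stmt7 (F : Type*) (K I : Type*) [Field F]
    (p : ℕ) [hp : Fact p.Prime] [CharP F p]
    [LieRing K] [LieAlgebra F K] [LieRing I] [LieAlgebra F I]
    (ψ : K →ₗ⁅F⁆ LieDerivation F I I)
    (α : LieDerivation F K K) (β : LieDerivation F I I)
    (hcomp : ∀ (k : K) (v : I), β (ψ k v) = ψ (α k) v + ψ k (β v)) :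
    ∀ (k : K) (v : I),
      ((β.toLinearMap : Module.End F I) ^ p) (ψ k v) =
        ψ (((α.toLinearMap : Module.End F K) ^ p) k) v +
        ψ k (((β.toLinearMap : Module.End F I) ^ p) v) := by
  intro k v
  set A : Module.End F K := (α.toLinearMap : Module.End F K) with hA
  set B : Module.End F I := (β.toLinearMap : Module.End F I) with hB
  -- f i j = ψ (αⁱ k) (βʲ v)
  set f : ℕ → ℕ → I := fun i j => ψ ((A ^ i) k) ((B ^ j) v) with hf
  have hstep : ∀ i j, B (f i j) = f (i + 1) j + f i (j + 1) := by
    intro i j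
    have h := hcomp ((A ^ i) k) ((B ^ j) v)
    simp only [hf]
    rw [pow_succ' A i, pow_succ' B j, Module.End.mul_apply, Module.End.mul_apply]
    exact h
  have key : ∀ n : ℕ, (B ^ n) (ψ k v) =
      ∑ i ∈ Finset.range (n + 1), (n.choose i : F) • f i (n - i) := by
    intro n
    induction n with
    | zero => simp [hf]
    | succ n ih =>
      rw [pow_succ' B n, Module.End.mul_apply, ih, map_sum]
      have lhs_eq : ∀ i ∈ Finset.range (n + 1),
          B ((n.choose i : F) • f i (n - i)) =
            (n.choose i : F) • f (i + 1) (n - i) + (n.choose i : F) • f i (n + 1 - i) := by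
        intro i hi
        have hi' := Nat.lt_succ_iff.mp (Finset.mem_range.mp hi)
        have hji : n - i + 1 = n + 1 - i := by omega
        rw [map_smul, hstep, smul_add, hji]
      rw [Finset.sum_congr rfl lhs_eq, Finset.sum_add_distrib]
      have hterm : ∀ i ∈ Finset.range (n + 1),
          (((n + 1).choose (i + 1) : F)) • f (i + 1) (n + 1 - (i + 1)) =
            (n.choose i : F) • f (i + 1) (n - i) + (n.choose (i + 1) : F) • f (i + 1) (n - i) := by
        intro i hi
        have hs : n + 1 - (i + 1) = n - i := by omega
        rw [hs, Nat.choose_succ_succ, Nat.cast_add, add_smul]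
      have e1 := Finset.sum_range_succ' (fun i => ((n.choose i : F) • f i (n + 1 - i))) (n + 1)
      simp only [Nat.succ_sub_succ] at e1
      rw [Finset.sum_range_succ] at e1
      simp only [Nat.choose_succ_self, Nat.cast_zero, zero_smul, add_zero, Nat.choose_zero_right,
        Nat.cast_one, one_smul, Nat.sub_zero] at e1
      rw [Finset.sum_range_succ' (fun i => (((n + 1).choose i : F)) • f i (n + 1 - i)) (n + 1)]
      simp only [Nat.choose_zero_right, Nat.cast_one, one_smul, Nat.sub_zero]
      rw [Finset.sum_congr rfl hterm, Finset.sum_add_distrib, add_assoc, ← e1]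
  rw [key p]
  have hp1 : 1 ≤ p := hp.out.one_lt.le.trans' (by norm_num)
  rw [Finset.sum_range_succ]
  have hmid : ∑ i ∈ Finset.range p, (p.choose i : F) • f i (p - i) = f 0 p := by
    rw [Finset.sum_eq_single 0]
    · simp
    · intro i hi hi0
      have : (p.choose i : F) = 0 := by
        have hd : p ∣ p.choose i := hp.out.dvd_choose_self hi0 (Finset.mem_range.mp hi)
        exact (CharP.cast_eq_zero_iff F p _).mpr hd
      rw [this, zero_smul]
    · intro h
      exact absurd (Finset.mem_range.mpr hp.out.pos) h
  rw [hmid]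
  simp [hf, add_comm]
end

section
/- Let V be a p-dimensional vector space over a field F of characteristic p with |F| ≥ p^2, with basis v_0,...,v_{p-1}. Let x ∈ gl(V) be the cyclic shift x(v_i) = v_{i+1 mod p}, let K = span{x} (an abelian Lie algebra acting on V), and L = K ⋉ V. Choose α, β ∈ F \ {0} with α ≠ γβ for all γ in the prime field F_p. Then the linear map δ : L → L given by δ(x) = αx and δ(v_i) = (β + (i+1)α)v_i is a non-singular (bijective) derivation of L. -/
/-- The cyclic shift endomorphism `x` of `V = F^p`, sending the basis vector `v_i`
to `v_{i+1 mod p}`; concretely `(shift v) j = v (j-1)`. -/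
def cycShift (F : Type*) [Field F] (p : ℕ) [NeZero p] : (Fin p → F) →ₗ[F] (Fin p → F) :=
  LinearMap.funLeft F F (fun j => j - 1)

/-- The bracket of the semidirect sum `L = K ⋉ V`, `K = span{x}` with `x` the cyclic
shift: `[(a·x, v), (b·x, w)] = (0, a·x(w) - b·x(v))`. An element `(a, v) : F × (Fin p → F)`
represents `a·x + v ∈ L`. -/
def cycBracket (F : Type*) [Field F] (p : ℕ) [NeZero p] :
    (F × (Fin p → F)) → (F × (Fin p → F)) → (F × (Fin p → F)) :=
  fun u w => (0, u.1 • cycShift F p w.2 - w.1 • cycShift F p u.2)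

/-- The linear map `δ : L → L`, `δ(x) = α·x` and `δ(v_i) = (β + (i+1)·α)·v_i`. -/
def cycDelta (F : Type*) [Field F] (p : ℕ) [NeZero p] (α β : F) :
    Module.End F (F × (Fin p → F)) :=
  LinearMap.prodMap (α • LinearMap.id)
    (LinearMap.pi fun j : Fin p =>
      (β + (((j : ℕ) + 1 : ℕ) : F) * α) • LinearMap.proj j)

/-!
`δ` acts diagonally: by `α` on `K` and by `c i = β + (i+1)α` on `v_i`. Because `x` raises
the index by one, `δ` is a derivation exactly when `c (i+1) = c i + α` for all `i ∈ ℤ/p`,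
which holds since `p = 0` in `F`. It is bijective when no coefficient vanishes: `β ≠ 0`, and
`β + nα = 0` with `n ≠ 0` in `F` would give `α = -n⁻¹β` with `-n⁻¹` in the prime field.
-/

theorem Fin.natCast_val_sub {R : Type*} [Ring R] {n : ℕ} [CharP R n] (i j : Fin n) :
    (((i - j : Fin n) : ℕ) : R) = (i : R) - (j : R) := by
  rw [Fin.val_sub, ← CharP.cast_eq_mod, Nat.cast_add, Nat.cast_sub j.is_lt.le,
    CharP.cast_eq_zero, zero_sub, neg_add_eq_sub]

theorem add_natCast_mul_ne_zero {F : Type*} [Field F] {p : ℕ} [Fact p.Prime] [CharP F p]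
    {α β : F} (hβ : β ≠ 0) (hαβ : ∀ γ : ℕ, α ≠ (γ : F) * β) (n : ℕ) :
    β + (n : F) * α ≠ 0 := by
  intro h
  by_cases hn : (n : F) = 0
  · rw [hn, zero_mul, add_zero] at h
    exact hβ h
  · -- `-n⁻¹` is the image of an element of `ZMod p`, hence a natural-number cast
    have hγ : (((-(n : ZMod p)⁻¹).val : ℕ) : F) = -(n : F)⁻¹ := by
      rw [ZMod.natCast_val]
      change ZMod.castHom (dvd_refl p) F _ = _
      rw [map_neg, map_inv₀, map_natCast]
    apply hαβ (-(n : ZMod p)⁻¹).val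
    rw [hγ]
    field_simp
    linear_combination h

section CyclicSemidirect

variable {F : Type*} [Field F] {p : ℕ} [NeZero p]

theorem cycDelta_apply (α β : F) (u : F × (Fin p → F)) :
    cycDelta F p α β u =
      (α * u.1, fun j : Fin p => (β + (((j : ℕ) + 1 : ℕ) : F) * α) * u.2 j) := by
  simp [cycDelta, LinearMap.prodMap, LinearMap.pi]

theorem cycDelta_bijective {α β : F} (hα : α ≠ 0)
    (hc : ∀ j : Fin p, β + (((j : ℕ) + 1 : ℕ) : F) * α ≠ 0) :
    Function.Bijective (cycDelta F p α β) := by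
  have hinj : Function.Injective (cycDelta F p α β) := by
    refine (injective_iff_map_eq_zero _).mpr fun u hu => ?_
    rw [cycDelta_apply, Prod.mk_eq_zero, funext_iff] at hu
    refine Prod.ext ?_ (funext fun j => ?_)
    · exact (mul_eq_zero.mp hu.1).resolve_left hα
    · exact (mul_eq_zero.mp (hu.2 j)).resolve_left (hc j)
  exact ⟨hinj, LinearMap.injective_iff_surjective.mp hinj⟩

theorem cycDelta_cycBracket [CharP F p] (α β : F) (u w : F × (Fin p → F)) :
    cycDelta F p α β (cycBracket F p u w) =
      cycBracket F p (cycDelta F p α β u) w + cycBracket F p u (cycDelta F p α β w) := by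
  have hstep (j : Fin p) : ((((j - 1 : Fin p) : ℕ) + 1 : ℕ) : F) = ((j : ℕ) : F) := by
    rw [Nat.cast_succ, Fin.natCast_val_sub, Fin.val_one', ← CharP.cast_eq_mod, Nat.cast_one,
      sub_add_cancel]
  simp only [cycDelta_apply, cycBracket, cycShift]
  ext j
  · simp
  · simp only [Pi.sub_apply, Pi.smul_apply, smul_eq_mul, Prod.snd_add, Pi.add_apply,
      LinearMap.funLeft_apply]
    rw [Nat.cast_succ (j : ℕ), ← hstep j]
    ring

end CyclicSemidirect

theorem stmt13_general (F : Type*) [Field F] (p : ℕ) [hp : Fact p.Prime] [NeZero p] [CharP F p]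
    (α β : F) (hα : α ≠ 0) (hβ : β ≠ 0)
    (hαβ : ∀ γ : ℕ, α ≠ (γ : F) * β) :
    Function.Bijective (cycDelta F p α β) ∧
    ∀ u w : F × (Fin p → F),
      cycDelta F p α β (cycBracket F p u w) =
        cycBracket F p (cycDelta F p α β u) w +
        cycBracket F p u (cycDelta F p α β w) :=
  ⟨cycDelta_bijective hα fun _ => add_natCast_mul_ne_zero hβ hαβ _, cycDelta_cycBracket α β⟩

/-- Let `V` be a `p`-dimensional vector space over a field `F` of characteristic `p`
with `|F| ≥ p²`, `x` the cyclic shift, `K = span{x}`, `L = K ⋉ V`. If `α, β ≠ 0` and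
`α ≠ γ·β` for every `γ` in the prime field, then `δ` given by `δ(x) = α·x`,
`δ(v_i) = (β + (i+1)α)·v_i` is a non-singular (bijective) derivation of `L`. -/
theorem stmt13 (F : Type*) [Field F] (p : ℕ) [hp : Fact p.Prime] [NeZero p] [CharP F p]
    (hF : Nat.card F = 0 ∨ p ^ 2 ≤ Nat.card F)
    (α β : F) (hα : α ≠ 0) (hβ : β ≠ 0)
    (hαβ : ∀ γ : ℕ, α ≠ (γ : F) * β) :
    Function.Bijective (cycDelta F p α β) ∧
    ∀ u w : F × (Fin p → F),
      cycDelta F p α β (cycBracket F p u w) =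
        cycBracket F p (cycDelta F p α β u) w +
        cycBracket F p u (cycDelta F p α β w) :=
  stmt13_general F p (hp := hp) α β hα hβ hαβ
end

section
/- Let K be a finite-dimensional solvable Lie algebra over an algebraically closed field F of characteristic 0, and let I be a finite-dimensional K-module via ψ : K → gl(I). Suppose there is a compatible pair (α,β) ∈ Der(K) × gl(I) (satisfying β(ψ(k)(v)) = ψ(α(k))(v) + ψ(k)(β(v)) for all k, v) with α bijective of finite order. Then ψ(k) is a nilpotent endomorphism for every k ∈ K. -/
attribute [local instance 100] LieRing.ofAssociativeRing

open Module Module.End LieModule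

/-!
Since `α ^ n = 1` in characteristic zero, `α` is diagonalizable, and being injective it has only
nonzero eigenvalues. For an eigenvector `x` of eigenvalue `μ ≠ 0`, compatibility reads
`⁅β, ψ x⁆ = μ • ψ x`, so every nonzero power `(ψ x) ^ m` is an eigenvector of `ad β` with
eigenvalue `m * μ`; as `ad β` has finitely many eigenvalues, `ψ x` is nilpotent. Hence `K` is
spanned by elements acting nilpotently on `I`. By Lie's theorem a nonzero `I` has a common
eigenvector whose weight, vanishing on that spanning set, is zero; so `K` has nonzero invariants
in `I`, and induction on the dimension through the quotient by the invariants shows that `I` is a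
nilpotent `K`-module, i.e. (Engel) that every `ψ k` is nilpotent.
-/

section Associative

variable {F A : Type*} [Field F] [Ring A] [Algebra F A]

lemma lie_pow_eq_smul_of_lie_eq_smul {b x : A} {ζ : F} (h : ⁅b, x⁆ = ζ • x) (m : ℕ) :
    ⁅b, x ^ m⁆ = ((m : F) * ζ) • x ^ m := by
  induction m with
  | zero => simp [Ring.lie_def]
  | succ m ih =>
    calc ⁅b, x ^ (m + 1)⁆ = ⁅b, x ^ m⁆ * x + x ^ m * ⁅b, x⁆ := by
          simp only [Ring.lie_def, pow_succ]; noncomm_ring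
      _ = (((m + 1 : ℕ) : F) * ζ) • x ^ (m + 1) := by
          rw [ih, h, smul_mul_assoc, mul_smul_comm, ← pow_succ, ← add_smul]
          congr 1; push_cast; ring

variable [CharZero F] [FiniteDimensional F A]

lemma isNilpotent_of_lie_eq_smul {b x : A} {ζ : F} (hζ : ζ ≠ 0) (h : ⁅b, x⁆ = ζ • x) :
    IsNilpotent x := by
  by_contra hx
  have hev (m : ℕ) : (LieAlgebra.ad F A b).HasEigenvalue ((m : F) * ζ) :=
    hasEigenvalue_of_hasEigenvector
      ⟨mem_eigenspace_iff.mpr (lie_pow_eq_smul_of_lie_eq_smul h m), fun h0 => hx ⟨m, h0⟩⟩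
  exact Set.infinite_of_injective_forall_mem
    (fun a b hab => by simpa [hζ] using hab) hev (finite_hasEigenvalue _)

end Associative

lemma Module.End.isSemisimple_of_pow_eq_one {F V : Type*} [Field F] [CharZero F]
    [AddCommGroup V] [Module F V] {f : End F V} {n : ℕ} (hn : n ≠ 0) (h : f ^ n = 1) :
    f.IsSemisimple :=
  isSemisimple_of_squarefree_aeval_eq_zero
    (Polynomial.separable_X_pow_sub_C (1 : F) (Nat.cast_ne_zero.mpr hn) one_ne_zero).squarefree
    (by simp [h])

lemma LieSubmodule.Quotient.isNilpotent_toEnd {R L M : Type*} [CommRing R] [LieRing L]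
    [LieAlgebra R L] [AddCommGroup M] [Module R M] [LieRingModule L M] [LieModule R L M]
    (N : LieSubmodule R L M) {x : L} (hx : IsNilpotent (toEnd R L M x)) :
    IsNilpotent (toEnd R L (M ⧸ N) x) := by
  obtain ⟨n, hn⟩ := hx
  refine ⟨n, LinearMap.ext fun m => ?_⟩
  obtain ⟨m, rfl⟩ := LieSubmodule.Quotient.surjective_mk' N m
  exact (toEnd_pow_apply_map (LieSubmodule.Quotient.mk' N) n x m).trans (by simp [hn])

namespace LieModule

variable {F K M : Type*} [Field F] [IsAlgClosed F] [CharZero F]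
  [LieRing K] [LieAlgebra F K] [LieAlgebra.IsSolvable K]
  [AddCommGroup M] [Module F M] [LieRingModule K M] [LieModule F K M] [FiniteDimensional F M]

lemma nontrivial_maxTrivSubmodule_of_isNilpotent_toEnd_of_span_eq_top [Nontrivial M] {s : Set K}
    (hs : Submodule.span F s = ⊤) (hnil : ∀ x ∈ s, _root_.IsNilpotent (toEnd F K M x)) :
    Nontrivial (maxTrivSubmodule F K M) := by
  obtain ⟨χ, hχ⟩ := exists_nontrivial_weightSpace_of_isSolvable F K M
  obtain ⟨⟨v, hv⟩, hv0⟩ := exists_ne (0 : weightSpace M χ)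
  rw [mem_weightSpace] at hv
  replace hv0 : v ≠ 0 := by simpa using hv0
  have hχ : χ = 0 := LinearMap.ext_on hs fun x hx =>
    (hasEigenvalue_of_hasEigenvector (f := toEnd F K M x) ⟨mem_eigenspace_iff.mpr (hv x), hv0⟩
      |>.isNilpotent_of_isNilpotent (hnil x hx)).eq_zero
  exact nontrivial_of_ne ⟨v, fun x => by simpa [hχ] using hv x⟩ 0 fun h => hv0 congr($h.1)

lemma isNilpotent_of_isNilpotent_toEnd_of_span_eq_top {s : Set K} (hs : Submodule.span F s = ⊤)
    (hnil : ∀ x ∈ s, _root_.IsNilpotent (toEnd F K M x)) : IsNilpotent K M := by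
  induction h : finrank F M using Nat.strong_induction_on generalizing M with
  | _ d ih =>
  rcases subsingleton_or_nontrivial M with hM | hM
  · infer_instance
  have := nontrivial_maxTrivSubmodule_of_isNilpotent_toEnd_of_span_eq_top hs hnil
  have hlt : finrank F (M ⧸ maxTrivSubmodule F K M) < d := by
    have h1 := (maxTrivSubmodule F K M).toSubmodule.finrank_quotient_add_finrank
    have h2 : 0 < finrank F (maxTrivSubmodule F K M).toSubmodule := finrank_pos
    exact (by omega : finrank F (M ⧸ (maxTrivSubmodule F K M).toSubmodule) < d)
  exact nilpotentOfNilpotentQuotient F K M le_rfl (ih _ hlt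
    (fun x hx => LieSubmodule.Quotient.isNilpotent_toEnd _ (hnil x hx)) rfl)

end LieModule

/-- Let `K` be a finite-dimensional solvable Lie algebra over an algebraically closed
field `F` of characteristic `0`, and `I` a finite-dimensional `K`-module via
`ψ : K → gl(I)`. If `(α, β)` is a compatible pair (i.e. `[β, ψ k] = ψ (α k)` for all
`k`) with `α` a bijective derivation of finite order, then `ψ k` is nilpotent for
every `k ∈ K`. -/
theorem stmt15 (F : Type*) [Field F] [IsAlgClosed F] [CharZero F]
    (K : Type*) [LieRing K] [LieAlgebra F K] [FiniteDimensional F K]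
    [LieAlgebra.IsSolvable K]
    (I : Type*) [AddCommGroup I] [Module F I] [FiniteDimensional F I]
    (ψ : K →ₗ⁅F⁆ Module.End F I)
    (α : LieDerivation F K K) (hbij : Function.Bijective α)
    (n : ℕ) (hn : 1 ≤ n) (hord : (α.toLinearMap : Module.End F K) ^ n = 1)
    (β : Module.End F I)
    (hcomp : ∀ k : K, ⁅β, ψ k⁆ = ψ (α k)) :
    ∀ k : K, IsNilpotent (ψ k) := by
  let _ : LieRingModule K I := .compLieHom I ψ
  have _ : LieModule F K I := .compLieHom I ψ
  have hspan : Submodule.span F (⋃ μ, (eigenspace (α : End F K) μ : Set K)) = ⊤ := by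
    rw [Submodule.span_iUnion]
    simpa using (isSemisimple_of_pow_eq_one (by omega) hord).iSup_eigenspace_eq_top
  have hnil : ∀ x ∈ ⋃ μ, (eigenspace (α : End F K) μ : Set K), IsNilpotent (ψ x) := by
    simp only [Set.mem_iUnion, SetLike.mem_coe, mem_eigenspace_iff]
    rintro x ⟨μ, hx⟩
    rcases eq_or_ne μ 0 with rfl | hμ
    · obtain rfl : x = 0 := hbij.injective (by simpa using hx)
      simp
    · exact isNilpotent_of_lie_eq_smul hμ (by rw [hcomp, ← map_smul, ← hx]; rfl)
  exact isNilpotent_iff_forall'.mp (isNilpotent_of_isNilpotent_toEnd_of_span_eq_top hspan hnil)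
end

section
/- Let V be a finite-dimensional vector space over a field F, let x, y ∈ gl(V) with ad(x)^n(y) = 0 for some n ≥ 1 (iterated commutator in gl(V)), and let q ∈ F[t]. Then the generalized kernel V_0(q(x)) = {v ∈ V : q(x)^m v = 0 for some m > 0} is invariant under y. -/
open LinearMap Polynomial

lemma commute_aeval' {F A : Type*} [CommSemiring F] [Semiring A] [Algebra F A]
    (a : A) (p : Polynomial F) : Commute a (aeval a p) := by
  rw [Polynomial.aeval_eq_sum_range]
  exact Commute.sum_right _ _ _ fun i _ => (Commute.pow_right (Commute.refl a) i).smul_right _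

lemma commute_aeval₂' {F A : Type*} [CommSemiring F] [Semiring A] [Algebra F A]
    {a b : A} (hab : Commute a b) (p : Polynomial F) : Commute a (aeval b p) := by
  rw [Polynomial.aeval_eq_sum_range]
  exact Commute.sum_right _ _ _ fun i _ => (hab.pow_right i).smul_right _

/-- For commuting `a b` in an `F`-algebra, `q(a) - q(b) = (a - b) * c` for some `c`
commuting with both `a` and `b`. -/
lemma exists_comm_factor {F A : Type*} [CommSemiring F] [Ring A] [Algebra F A]
    (a b : A) (hab : Commute a b) (q : Polynomial F) :
    ∃ c, Commute a c ∧ Commute b c ∧ aeval a q - aeval b q = (a - b) * c := by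
  induction q using Polynomial.induction_on with
  | C k => exact ⟨0, Commute.zero_right _, Commute.zero_right _, by simp⟩
  | add p r hp hr =>
      obtain ⟨cp, hacp, hbcp, hcp⟩ := hp
      obtain ⟨cr, hacr, hbcr, hcr⟩ := hr
      refine ⟨cp + cr, hacp.add_right hacr, hbcp.add_right hbcr, ?_⟩
      rw [map_add, map_add, mul_add, ← hcp, ← hcr]
      abel
  | monomial j k ih =>
      obtain ⟨c, hac, hbc, hc⟩ := ih
      have hcommb : Commute a (aeval b (Polynomial.C k * Polynomial.X ^ j)) :=
        commute_aeval₂' hab _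
      refine ⟨c * a + aeval b (Polynomial.C k * Polynomial.X ^ j),
        (hac.mul_right (Commute.refl a)).add_right hcommb,
        (hbc.mul_right hab.symm).add_right (commute_aeval' b _), ?_⟩
      have e1 : aeval a (Polynomial.C k * Polynomial.X ^ (j + 1))
          = aeval a (Polynomial.C k * Polynomial.X ^ j) * a := by
        rw [show (Polynomial.C k * Polynomial.X ^ (j + 1) : Polynomial F)
              = (Polynomial.C k * Polynomial.X ^ j) * Polynomial.X by ring, map_mul, aeval_X]
      have e2 : aeval b (Polynomial.C k * Polynomial.X ^ (j + 1))
          = aeval b (Polynomial.C k * Polynomial.X ^ j) * b := by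
        rw [show (Polynomial.C k * Polynomial.X ^ (j + 1) : Polynomial F)
              = (Polynomial.C k * Polynomial.X ^ j) * Polynomial.X by ring, map_mul, aeval_X]
      have h3 : (a - b) * aeval b (Polynomial.C k * Polynomial.X ^ j)
          = aeval b (Polynomial.C k * Polynomial.X ^ j) * a
            - aeval b (Polynomial.C k * Polynomial.X ^ j) * b := by
        rw [sub_mul, hcommb.eq, (commute_aeval' b _).eq]
      rw [e1, e2, mul_add, ← mul_assoc, ← hc, h3, sub_mul]
      abel

lemma mulRight_aeval' {F V : Type*} [Field F] [AddCommGroup V] [Module F V]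
    (x : Module.End F V) (q : Polynomial F) :
    LinearMap.mulRight F (aeval x q) = aeval (LinearMap.mulRight F x) q := by
  induction q using Polynomial.induction_on with
  | C a =>
      ext z w
      simp [Polynomial.aeval_C, Algebra.algebraMap_eq_smul_one, mul_smul_comm]
  | add p r hp hr =>
      rw [map_add, map_add, ← hp, ← hr]
      ext z w
      simp [mul_add]
  | monomial k a ih =>
      have h : (Polynomial.C a * Polynomial.X ^ (k+1))
          = (Polynomial.C a * Polynomial.X ^ k) * Polynomial.X := by ring
      rw [h]
      rw [show (aeval x) (Polynomial.C a * Polynomial.X ^ k * Polynomial.X)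
            = (aeval x) (Polynomial.C a * Polynomial.X ^ k) * x by simp]
      rw [show (aeval (LinearMap.mulRight F x)) (Polynomial.C a * Polynomial.X ^ k * Polynomial.X)
            = (aeval (LinearMap.mulRight F x)) (Polynomial.C a * Polynomial.X ^ k)
              * LinearMap.mulRight F x by simp]
      rw [LinearMap.mulRight_mul, ih]
      exact (commute_aeval' (LinearMap.mulRight F x) (Polynomial.C a * Polynomial.X ^ k)).eq

lemma mulLeft_aeval' {F V : Type*} [Field F] [AddCommGroup V] [Module F V]
    (x : Module.End F V) (q : Polynomial F) :
    LinearMap.mulLeft F (aeval x q) = aeval (LinearMap.mulLeft F x) q := by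
  induction q using Polynomial.induction_on with
  | C a =>
      ext z w
      simp [Polynomial.aeval_C, Algebra.algebraMap_eq_smul_one, smul_mul_assoc]
  | add p r hp hr =>
      rw [map_add, map_add, ← hp, ← hr]
      ext z w
      simp [add_mul]
  | monomial k a ih =>
      have h : (Polynomial.C a * Polynomial.X ^ (k+1))
          = Polynomial.X * (Polynomial.C a * Polynomial.X ^ k) := by ring
      rw [h]
      rw [show (aeval x) (Polynomial.X * (Polynomial.C a * Polynomial.X ^ k))
            = x * (aeval x) (Polynomial.C a * Polynomial.X ^ k) by simp]
      rw [show (aeval (LinearMap.mulLeft F x)) (Polynomial.X * (Polynomial.C a * Polynomial.X ^ k))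
            = LinearMap.mulLeft F x
              * (aeval (LinearMap.mulLeft F x)) (Polynomial.C a * Polynomial.X ^ k) by simp]
      rw [LinearMap.mulLeft_mul, ih]
      rfl

/-- Let `V` be a finite-dimensional vector space over `F`, `x, y ∈ gl(V)` with
`ad(x)^n (y) = 0` for some `n ≥ 1`, and `q ∈ F[t]`. Then the generalized kernel
`V₀(q(x)) = {v : q(x)^m v = 0 for some m > 0}` is invariant under `y`. -/
theorem stmt17 (F : Type*) (V : Type*) [Field F] [AddCommGroup V] [Module F V]
    [FiniteDimensional F V]
    (x y : Module.End F V) (n : ℕ) (hn : 1 ≤ n)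
    (had : (fun z => ⁅x, z⁆)^[n] y = 0)
    (q : Polynomial F) :
    ∀ v : V, (∃ m : ℕ, 0 < m ∧ ((Polynomial.aeval x) q ^ m) v = 0) →
      ∃ m : ℕ, 0 < m ∧ ((Polynomial.aeval x) q ^ m) (y v) = 0 := by
  rintro v ⟨m, hm, hv⟩
  set B : Module.End F V := aeval x q with hBdef
  set L : Module.End F (Module.End F V) := LinearMap.mulLeft F x with hLdef
  set R : Module.End F (Module.End F V) := LinearMap.mulRight F x with hRdef
  have hcomm : Commute L R := LinearMap.commute_mulLeft_right x x
  obtain ⟨c, hLc, hRc, hc⟩ := exists_comm_factor L R hcomm q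
  -- ad(x)^n y = 0, as a linear-map power
  have hLR : ((L - R) ^ n) y = 0 := by
    have hfun : (fun z => ⁅x, z⁆) = ⇑(L - R) := by
      funext z
      simp [hLdef, hRdef, Ring.lie_def]
    calc ((L - R) ^ n) y = (⇑(L - R))^[n] y := by rw [Module.End.pow_apply]
    _ = 0 := by rw [← hfun, had]
  -- key: ad(B)^n y = 0
  have hval : LinearMap.mulLeft F B - LinearMap.mulRight F B = (L - R) * c := by
    rw [hBdef, mulLeft_aeval', mulRight_aeval', ← hLdef, ← hRdef, hc]
  have hLRc : Commute (L - R) c := hLc.sub_left hRc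
  have hDkey : ((LinearMap.mulLeft F B - LinearMap.mulRight F B) ^ n) y = 0 := by
    rw [hval, hLRc.eq, (hLRc.symm).mul_pow, Module.End.mul_apply, hLR, map_zero]
  set D : Module.End F (Module.End F V) := LinearMap.mulLeft F B - LinearMap.mulRight F B
    with hDdef
  have hDk : ∀ k, n ≤ k → (D ^ k) y = 0 := by
    intro k hk
    obtain ⟨j, rfl⟩ := Nat.exists_eq_add_of_le hk
    rw [add_comm, pow_add, Module.End.mul_apply, hDkey, map_zero]
  set RB : Module.End F (Module.End F V) := LinearMap.mulRight F B with hRBdef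
  have hcB : Commute D RB :=
    (LinearMap.commute_mulLeft_right B B).sub_left (Commute.refl RB)
  set M : ℕ := m + n with hMdef
  refine ⟨M, by positivity, ?_⟩
  have hexp : (B ^ M) (y v) = ((LinearMap.mulLeft F (B ^ M)) y) v := by
    simp [LinearMap.mulLeft_apply]
  rw [hexp, ← LinearMap.pow_mulLeft]
  have hsplit : LinearMap.mulLeft F B = D + RB := by
    rw [hDdef, hRBdef, sub_add_cancel]
  rw [hsplit, hcB.add_pow, LinearMap.sum_apply, LinearMap.sum_apply]
  refine Finset.sum_eq_zero fun k hk => ?_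
  rw [(hcB.pow_pow k (M - k)).eq]
  simp only [Module.End.mul_apply]
  rw [Module.End.natCast_apply, map_nsmul, map_nsmul]
  have hRBpow : RB ^ (M - k) = LinearMap.mulRight F (B ^ (M - k)) :=
    by rw [LinearMap.pow_mulRight]
  by_cases hkn : n ≤ k
  · rw [hDk k hkn, map_zero, smul_zero, LinearMap.zero_apply]
  · push_neg at hkn
    have hmk : m ≤ M - k := by omega
    obtain ⟨j, hj⟩ := Nat.exists_eq_add_of_le hmk
    have hBMk : (B ^ (M - k)) v = 0 := by
      rw [hj, add_comm, pow_add, Module.End.mul_apply, hv, map_zero]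
    rw [hRBpow, LinearMap.mulRight_apply, LinearMap.smul_apply,
      Module.End.mul_apply, hBMk, map_zero, smul_zero]
end
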